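/- arXiv:1601.00408 — 4 statements merged into one kernel-verified Lean document; each statement's English description precedes it below -/
import Mathlib

section
/- In the standard MV-algebra on [0,1] with Łukasiewicz operations x⊕y = min(x+y,1), ¬x = 1−x, x→y = min(1−x+y,1), and x∧y = min(x,y), for every n ≥ 2 and every tuple (a₁,…,aₙ) ∈ [0,1]ⁿ, the formula δ = (⊕_{i≤n} p_i) ∧ ⋀_{i≤n}((⊕_{j≠i} p_j) → ¬p_i) evaluates to 1 under the assignment p_i ↦ a_i if and only if ∑_{i≤n} a_i = 1. -/
/-!
Since the values are nonnegative, `⊕` of a sublist is `min (sum) 1`, so with `S = ∑ aᵢ` the formula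
evaluates to `1` iff `1 ≤ S` and `min (S - aᵢ) 1 ≤ 1 - aᵢ` for every `i`. If `S > 1`, the second
condition rules out `S - aᵢ < 1`, so `S - aᵢ ≥ 1` and hence `aᵢ ≤ 0` for all `i`, contradicting `S > 1`.
-/

noncomputable def lukOplus (x y : ℝ) : ℝ := min (x + y) 1
noncomputable def lukNeg (x : ℝ) : ℝ := 1 - x
noncomputable def lukImp (x y : ℝ) : ℝ := min (1 - x + y) 1
noncomputable def lukAnd (x y : ℝ) : ℝ := min x y

/-- Iterated ⊕ of a list of truth values. -/
noncomputable def bigOplus (l : List ℝ) : ℝ := l.foldr lukOplus 0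

lemma bigOplus_le_one (l : List ℝ) : bigOplus l ≤ 1 := by
  cases l with
  | nil => norm_num [bigOplus]
  | cons x t => exact min_le_right _ _

lemma bigOplus_eq_min_sum (l : List ℝ) (h : ∀ x ∈ l, 0 ≤ x) : bigOplus l = min l.sum 1 := by
  induction l with
  | nil => simp [bigOplus]
  | cons x t ih =>
    have hx : 0 ≤ x := h x List.mem_cons_self
    change min (x + bigOplus t) 1 = _
    rw [ih fun y hy => h y (List.mem_cons_of_mem x hy), List.sum_cons, ← min_add_add_left,
      min_assoc, min_eq_right (by linarith : (1 : ℝ) ≤ x + 1)]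

lemma bigOplus_ofFn {n : ℕ} (a : Fin n → ℝ) (ha : ∀ i, 0 ≤ a i) :
    bigOplus (List.ofFn a) = min (∑ i, a i) 1 := by
  rw [bigOplus_eq_min_sum _ (by simpa [List.mem_ofFn] using ha), List.sum_ofFn]

lemma bigOplus_ofFn_eraseIdx {n : ℕ} (a : Fin n → ℝ) (ha : ∀ i, 0 ≤ a i) (i : Fin n) :
    bigOplus ((List.ofFn a).eraseIdx i) = min (∑ j, a j - a i) 1 := by
  have hi : (i : ℕ) < (List.ofFn a).length := by simp
  have hsum := List.CommMonoid.add_sum_eraseIdx hi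
  rw [List.getElem_ofFn, List.sum_ofFn] at hsum
  rw [bigOplus_eq_min_sum _ fun x hx => ?_, ← hsum]
  · rw [add_sub_cancel_left]
  · obtain ⟨j, rfl⟩ := List.mem_ofFn.mp (List.eraseIdx_subset hx)
    exact ha j

lemma one_le_lukImp_iff {x y : ℝ} : 1 ≤ lukImp x y ↔ x ≤ y := by
  simp only [lukImp, le_min_iff, le_refl, and_true]
  constructor <;> intro h <;> linarith

lemma one_le_sum_and_forall_min_le_iff {ι : Type*} [Fintype ι] (a : ι → ℝ) :
    (1 ≤ ∑ i, a i ∧ ∀ i, min (∑ j, a j - a i) 1 ≤ 1 - a i) ↔ ∑ i, a i = 1 := by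
  refine ⟨fun ⟨hge, hall⟩ => ?_, fun h => ⟨h.ge, fun i => by rw [h]; exact min_le_left _ _⟩⟩
  by_contra hne
  have hgt : 1 < ∑ i, a i := lt_of_le_of_ne hge (Ne.symm hne)
  have hzero : ∀ i, a i ≤ 0 := fun i => by
    rcases min_le_iff.mp (hall i) with h | h <;> linarith
  linarith [Finset.sum_nonpos fun i (_ : i ∈ Finset.univ) => hzero i]

theorem stmt0_general (n : ℕ) (a : Fin n → ℝ)
    (ha : ∀ i, a i ∈ Set.Icc (0:ℝ) 1)
    (hne : (Finset.univ : Finset (Fin n)).Nonempty) :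
    lukAnd (bigOplus (List.ofFn a))
      (Finset.univ.inf' hne (fun i =>
        lukImp (bigOplus ((List.ofFn a).eraseIdx i)) (lukNeg (a i)))) = 1
      ↔ ∑ i, a i = 1 := by
  have ha₀ : ∀ i, 0 ≤ a i := fun i => (ha i).1
  unfold lukAnd
  rw [← ((min_le_left _ _).trans (bigOplus_le_one _)).ge_iff_eq]
  simp only [le_min_iff, Finset.le_inf'_iff, Finset.mem_univ, true_imp_iff,
    one_le_lukImp_iff, bigOplus_ofFn a ha₀, bigOplus_ofFn_eraseIdx a ha₀, lukNeg,
    le_refl, and_true]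
  exact one_le_sum_and_forall_min_le_iff a

/-- The Łukasiewicz formula δ = (⊕_{i≤n} p_i) ∧ ⋀_{i≤n}((⊕_{j≠i} p_j) → ¬p_i)
evaluates to 1 at (a₁,…,aₙ) ∈ [0,1]ⁿ iff ∑ a_i = 1. -/
theorem stmt0 (n : ℕ) (hn : 2 ≤ n) (a : Fin n → ℝ)
    (ha : ∀ i, a i ∈ Set.Icc (0:ℝ) 1)
    (hne : (Finset.univ : Finset (Fin n)).Nonempty) :
    lukAnd (bigOplus (List.ofFn a))
      (Finset.univ.inf' hne (fun i =>
        lukImp (bigOplus ((List.ofFn a).eraseIdx i)) (lukNeg (a i)))) = 1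
      ↔ ∑ i, a i = 1 :=
  stmt0_general n a ha hne
end

section
/- Let x∧y = min(x,y), x⊕y = min(x+y,1), ¬x = 1−x, and x→y = min(1−x+y,1) on [0,1]. Define θ(x,y) = ¬(x→y) ∨ ¬(y→x) (where ∨ is max). Then θ(x,y) = |x−y| for all x,y ∈ [0,1], and the function η(x,y) = (θ(x,y) ∧ ¬θ(x,y)) ⊕ (θ(x,y) ∧ ¬θ(x,y)) equals 2·min(|x−y|, 1−|x−y|) for all x,y ∈ [0,1]. -/
noncomputable def lukTheta (x y : ℝ) : ℝ :=
  max (1 - min (1 - x + y) 1) (1 - min (1 - y + x) 1)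

noncomputable def lukEta (x y : ℝ) : ℝ :=
  min ((min (lukTheta x y) (1 - lukTheta x y)) + (min (lukTheta x y) (1 - lukTheta x y))) 1

/-- θ(x,y) = ¬(x→y) ∨ ¬(y→x) equals |x−y| on [0,1], and
η(x,y) = (θ∧¬θ) ⊕ (θ∧¬θ) equals 2·min(|x−y|, 1−|x−y|) on [0,1]. -/
theorem stmt1 :
    ∀ x ∈ Set.Icc (0:ℝ) 1, ∀ y ∈ Set.Icc (0:ℝ) 1,
      lukTheta x y = |x - y| ∧ lukEta x y = 2 * min |x - y| (1 - |x - y|) := by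
  rintro x ⟨hx0, hx1⟩ y ⟨hy0, hy1⟩
  have hth : lukTheta x y = |x - y| := by
    unfold lukTheta
    rcases le_total x y with h | h
    · rw [abs_of_nonpos (by linarith : x - y ≤ 0)]
      simp [min_def, max_def] <;> split_ifs <;> linarith
    · rw [abs_of_nonneg (by linarith : 0 ≤ x - y)]
      simp [min_def, max_def] <;> split_ifs <;> linarith
  refine ⟨hth, ?_⟩
  unfold lukEta
  rw [hth]
  have h0 : 0 ≤ |x - y| := abs_nonneg _
  have h1 : |x - y| ≤ 1 := by rw [abs_le]; constructor <;> linarith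
  rcases le_total (|x - y|) (1 - |x - y|) with h | h <;>
    simp [min_def] <;> split_ifs <;> linarith
end

section
/- Let n be a positive integer and let Łₙ be the (n+1)-element subalgebra of the standard MV-algebra with domain {0, 1/n, …, (n−1)/n, 1}. For each m ≤ n there exists a one-variable Łukasiewicz formula δ that is a characteristic formula for m/n in Łₙ: δ(m/n) = 1 and δ(x) = 0 for all x ∈ Łₙ with x ≠ m/n. -/
/-- One-variable Łukasiewicz formulas. -/
inductive LukFormula where
  | var : LukFormula
  | zero : LukFormula
  | one : LukFormula
  | neg : LukFormula → LukFormula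
  | oplus : LukFormula → LukFormula → LukFormula
  | sand : LukFormula → LukFormula → LukFormula
  | imp : LukFormula → LukFormula → LukFormula
  | and : LukFormula → LukFormula → LukFormula
  | or : LukFormula → LukFormula → LukFormula

noncomputable def LukFormula.eval : LukFormula → ℝ → ℝ
  | .var, x => x
  | .zero, _ => 0
  | .one, _ => 1
  | .neg t, x => 1 - t.eval x
  | .oplus t u, x => min (t.eval x + u.eval x) 1
  | .sand t u, x => max (t.eval x + u.eval x - 1) 0
  | .imp t u, x => min (1 - t.eval x + u.eval x) 1
  | .and t u, x => min (t.eval x) (u.eval x)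
  | .or t u, x => max (t.eval x) (u.eval x)

/-
Write `⌊u⌉ = max 0 (min 1 u)` for the truncation of a real number to `[0, 1]`.
For `x ∈ [0, 1]` and any real `u` one has `⌊u + x⌉ = (⌊u + 1⌉ ⊙ x) ⊕ ⌊u⌉`, so by induction on `j`
every function `x ↦ ⌊j x - c⌉` with `j ∈ ℕ`, `c ∈ ℤ` is given by a formula on `[0, 1]`. At
`x = k/n` the function `⌊n x - c⌉` takes the value `⌊k - c⌉`, which is `1` for `k > c` and `0`
for `k ≤ c`; hence `⌊n x - (m - 1)⌉ ∧ ¬⌊n x - m⌉` is characteristic for `m/n` in `Łₙ`.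
-/

def unitClamp (u : ℝ) : ℝ := max 0 (min 1 u)

lemma unitClamp_intCast (z : ℤ) : unitClamp z = if 0 < z then 1 else 0 := by
  unfold unitClamp
  split_ifs with hz
  · have : (1 : ℝ) ≤ z := by exact_mod_cast hz
    simp [this]
  · have : (z : ℝ) ≤ 0 := by exact_mod_cast not_lt.mp hz
    simp [this]

lemma unitClamp_add {x : ℝ} (hx₀ : 0 ≤ x) (hx₁ : x ≤ 1) (u : ℝ) :
    unitClamp (u + x) = min (max (unitClamp (u + 1) + x - 1) 0 + unitClamp u) 1 := by
  unfold unitClamp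
  grind

namespace LukFormula

def scaledStep : ℕ → ℤ → LukFormula
  | 0, c => if c < 0 then .one else .zero
  | j + 1, c => .oplus (.sand (scaledStep j (c - 1)) .var) (scaledStep j c)

lemma eval_scaledStep {x : ℝ} (hx₀ : 0 ≤ x) (hx₁ : x ≤ 1) (j : ℕ) (c : ℤ) :
    (scaledStep j c).eval x = unitClamp (j * x - c) := by
  induction j generalizing c with
  | zero =>
    have := unitClamp_intCast (-c)
    push_cast at this
    simp only [scaledStep, CharP.cast_eq_zero, zero_mul, zero_sub, this, neg_pos]
    split_ifs <;> rfl
  | succ j ih =>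
    have h := unitClamp_add hx₀ hx₁ (j * x - c)
    simp only [scaledStep, eval, ih, Int.cast_sub, Int.cast_one, Nat.cast_succ]
    rw [show (j : ℝ) * x - (c - 1) = j * x - c + 1 by ring, ← h]
    ring_nf

def characteristic (n m : ℕ) : LukFormula :=
  .and (scaledStep n ((m : ℤ) - 1)) (.neg (scaledStep n m))

lemma eval_characteristic {n : ℕ} (hn : 0 < n) (m : ℕ) {k : ℕ} (hk : k ≤ n) :
    (characteristic n m).eval ((k : ℝ) / n) = if k = m then 1 else 0 := by
  have hx₀ : (0 : ℝ) ≤ k / n := by positivity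
  have hx₁ : (k : ℝ) / n ≤ 1 := div_le_one_of_le₀ (by exact_mod_cast hk) (Nat.cast_nonneg n)
  have hgrid (c : ℤ) : (scaledStep n c).eval ((k : ℝ) / n) = if c < k then 1 else 0 := by
    rw [eval_scaledStep hx₀ hx₁, mul_div_cancel₀ _ (by positivity)]
    simpa using unitClamp_intCast (k - c)
  simp only [characteristic, eval, hgrid]
  split_ifs <;> first | omega | norm_num

end LukFormula

/-- For every m ≤ n there is a characteristic formula for m/n in the
(n+1)-valued Łukasiewicz algebra Łₙ = {0, 1/n, …, 1}. -/
theorem stmt15 (n : ℕ) (hn : 0 < n) (m : ℕ) (hm : m ≤ n) :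
    ∃ δ : LukFormula, δ.eval ((m : ℝ) / n) = 1 ∧
      ∀ k : ℕ, k ≤ n → k ≠ m → δ.eval ((k : ℝ) / n) = 0 := by
  refine ⟨.characteristic n m, ?_, fun k hk hkm => ?_⟩
  · simpa using LukFormula.eval_characteristic hn m hm
  · simpa [hkm] using LukFormula.eval_characteristic hn m hk
end

section
/- Let A be a standard algebra (so x∧y = 1 iff both x,y = 1 and x→y = 1 iff x ≤ y) and let G be a finite logical A-game in which every relevant strategy value has a truth constant in A. Then a strategy profile s* satisfies the formula γ_G = ⋀_{i∈N} ⋀_{s_i∈S_i} (φ_i(with player i's variables replaced by the constants for s_i) → φ_i(v)) (evaluated to 1 under the evaluation determined by s*) if and only if s* is a pure Nash equilibrium of G. -/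
lemma fold_mem (A : Set ℝ) (h1 : (1:ℝ) ∈ A) (wedge : ℝ → ℝ → ℝ)
    (hwc : ∀ x ∈ A, ∀ y ∈ A, wedge x y ∈ A) :
    ∀ l : List ℝ, (∀ x ∈ l, x ∈ A) → l.foldr wedge 1 ∈ A := by
  intro l
  induction l with
  | nil => intro _; simpa using h1
  | cons a l ih =>
      intro h
      exact hwc a (h a (by simp)) _ (ih fun x hx => h x (by simp [hx]))

lemma fold_eq_one (A : Set ℝ) (h1 : (1:ℝ) ∈ A) (wedge : ℝ → ℝ → ℝ)
    (hwc : ∀ x ∈ A, ∀ y ∈ A, wedge x y ∈ A)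
    (hw : ∀ x ∈ A, ∀ y ∈ A, (wedge x y = 1 ↔ x = 1 ∧ y = 1)) :
    ∀ l : List ℝ, (∀ x ∈ l, x ∈ A) → (l.foldr wedge 1 = 1 ↔ ∀ x ∈ l, x = 1) := by
  intro l
  induction l with
  | nil => simp
  | cons a l ih =>
      intro h
      have ha : a ∈ A := h a (by simp)
      have hl : ∀ x ∈ l, x ∈ A := fun x hx => h x (by simp [hx])
      simp only [List.foldr_cons]
      rw [hw a ha _ (fold_mem A h1 wedge hwc l hl), ih hl]
      simp

/-- In a finite expressible logical A-game over a standard algebra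
(x∧y = 1 iff x = y = 1; x→y = 1 iff x ≤ y), a strategy profile s satisfies the formula
γ_G = ⋀_{i∈N} ⋀_{t∈S_i} (φ_i(t, v_{-i}) → φ_i(v)) iff s is a pure Nash equilibrium.
The value of the big conjunction is computed by folding ∧ over the list of the values
of all the implications. -/
theorem stmt18 {n : ℕ} (S : Fin n → Type*) [∀ i, Fintype (S i)]
    (A : Set ℝ) (h1 : (1:ℝ) ∈ A)
    (wedge imp : ℝ → ℝ → ℝ)
    (hwc : ∀ x ∈ A, ∀ y ∈ A, wedge x y ∈ A)
    (hic : ∀ x ∈ A, ∀ y ∈ A, imp x y ∈ A)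
    (hw : ∀ x ∈ A, ∀ y ∈ A, (wedge x y = 1 ↔ x = 1 ∧ y = 1))
    (hi : ∀ x ∈ A, ∀ y ∈ A, (imp x y = 1 ↔ x ≤ y))
    (φ : ∀ _ : Fin n, (∀ j, S j) → ℝ)
    (hφ : ∀ i s, φ i s ∈ A)
    (s : ∀ j, S j) :
    ((Finset.univ : Finset ((i : Fin n) × S i)).toList.map
        (fun it => imp (φ it.1 (Function.update s it.1 it.2)) (φ it.1 s))).foldr wedge 1 = 1
      ↔ ∀ i, ∀ t : S i, φ i (Function.update s i t) ≤ φ i s := by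
  rw [fold_eq_one A h1 wedge hwc hw]
  · constructor
    · intro h i t
      have := h (imp (φ i (Function.update s i t)) (φ i s))
        (by simp only [List.mem_map]; exact ⟨⟨i, t⟩, by simp, rfl⟩)
      exact (hi _ (hφ _ _) _ (hφ _ _)).mp this
    · intro h x hx
      simp only [List.mem_map] at hx
      obtain ⟨⟨i, t⟩, -, rfl⟩ := hx
      exact (hi _ (hφ _ _) _ (hφ _ _)).mpr (h i t)
  · intro x hx
    simp only [List.mem_map] at hx
    obtain ⟨⟨i, t⟩, -, rfl⟩ := hx
    exact hic _ (hφ _ _) _ (hφ _ _)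
end
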